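/- For each cyclic permutation (i,j,k) of (1,2,3) and all signs ε, δ ∈ {+1,−1}, the idempotent I_{ij}^ε P_k^δ satisfies the inhomogeneous proper-value equation (K+1)(I_{ij}^ε P_k^δ) = 2 I_{ij}^ε P_k^δ − (1/2)(1 + εδ X₁X₂X₃). -/

import Mathlib

/-!
Each `w^l` squares to `-1`, commutes with `X_l` and anticommutes with the other two `X_m`. So
`J_l(U) w^l` is `0` when `w^l` commutes with `U` and is `U` when it anticommutes with `U`; hence
`1, X_i X_j, X_k, X₁X₂X₃` are eigenvectors of `K+1` with eigenvalues `0, 2, 2, 0`. Expanding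
`I_{ij}^ε P_k^δ = ¼ (1 + ε X_i X_j + δ X_k + εδ X_i X_j X_k)`, where the `X_l` commute so that
`X_i X_j X_k = X₁X₂X₃`, and applying `K+1` termwise gives the identity.
-/

open scoped TensorProduct

noncomputable section

/-- The standard positive-definite quadratic form on `ℝ³`. -/
abbrev Q3 : QuadraticForm ℝ (Fin 3 → ℝ) :=
  QuadraticMap.weightedSumSquares ℝ (fun _ : Fin 3 => (1 : ℝ))

/-- The Clifford algebra of 3-dimensional Euclidean space. -/
abbrev Cl3 : Type := CliffordAlgebra Q3

/-- The tensor product of two copies of `Cl3`, as ℝ-algebras. -/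
abbrev A3 : Type := Cl3 ⊗[ℝ] Cl3

/-- The generators `e₁, e₂, e₃` (indexed by `Fin 3`). -/
def e (l : Fin 3) : Cl3 := CliffordAlgebra.ι Q3 (Pi.single l 1)

/-- `X_l := e_l ⊗ e_l`. -/
def X (l : Fin 3) : A3 := e l ⊗ₜ[ℝ] e l

/-- `w^i := (e_j e_k) ⊗ 1` for `(i,j,k)` a cyclic permutation of the indices. -/
def w (i : Fin 3) : A3 := (e (i + 1) * e (i + 2)) ⊗ₜ[ℝ] (1 : Cl3)

/-- The (ℝ-linear) operators `J_l(U) := (1/2)(w^l U − U w^l)`. -/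
def J (l : Fin 3) (U : A3) : A3 := (1/2 : ℝ) • (w l * U - U * w l)

/-- Kähler's total angular momentum operator `K+1`. -/
def K1 (U : A3) : A3 := J 0 U * w 0 + J 1 U * w 1 + J 2 U * w 2

/-- The idempotents `I_{ij}^ε := (1/2)(1 + ε X_i X_j)`. -/
def Iem (i j : Fin 3) (ε : ℝ) : A3 := (1/2 : ℝ) • ((1 : A3) + ε • (X i * X j))

/-- The idempotents `P_l^δ := (1/2)(1 + δ X_l)`. -/
def P (l : Fin 3) (δ : ℝ) : A3 := (1/2 : ℝ) • ((1 : A3) + δ • X l)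


def AntiCommute {R : Type*} [Mul R] [Neg R] (a b : R) : Prop := a * b = -(b * a)

section AntiCommute

variable {R : Type*} [Ring R] {a b c : R}

theorem AntiCommute.eq (h : AntiCommute a b) : a * b = -(b * a) := h

theorem AntiCommute.symm (h : AntiCommute a b) : AntiCommute b a := by
  rw [AntiCommute, h.eq, neg_neg]

theorem AntiCommute.mul_right (hab : AntiCommute a b) (hac : AntiCommute a c) :
    Commute a (b * c) := by
  rw [Commute, SemiconjBy, ← mul_assoc, hab.eq, neg_mul, mul_assoc, hac.eq, mul_neg, neg_neg,
    mul_assoc]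

theorem Commute.mul_right_antiCommute (hab : Commute a b) (hac : AntiCommute a c) :
    AntiCommute a (b * c) := by
  rw [AntiCommute, ← mul_assoc, hab.eq, mul_assoc, hac.eq, mul_neg, mul_assoc]

theorem AntiCommute.mul_right_commute (hab : AntiCommute a b) (hac : Commute a c) :
    AntiCommute a (b * c) := by
  rw [AntiCommute, ← mul_assoc, hab.eq, neg_mul, mul_assoc, hac.eq, mul_assoc]

theorem AntiCommute.tmul {S A B : Type*} [CommSemiring S] [Ring A] [Ring B] [Algebra S A]
    [Algebra S B] {a₁ a₂ : A} {b₁ b₂ : B} (ha : AntiCommute a₁ a₂) (hb : Commute b₁ b₂) :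
    AntiCommute (a₁ ⊗ₜ[S] b₁) (a₂ ⊗ₜ[S] b₂) := by
  rw [AntiCommute, Algebra.TensorProduct.tmul_mul_tmul, Algebra.TensorProduct.tmul_mul_tmul,
    ha.eq, hb.eq, TensorProduct.neg_tmul]

end AntiCommute

theorem fin3_add_one_ne_self (i : Fin 3) : i + 1 ≠ i := by revert i; decide

theorem fin3_add_two_ne_self (i : Fin 3) : i + 2 ≠ i := by revert i; decide

theorem fin3_add_two_ne_add_one (i : Fin 3) : i + 2 ≠ i + 1 := by revert i; decide

theorem fin3_eq_add_one_or_eq_add_two {l m : Fin 3} (h : m ≠ l) : m = l + 1 ∨ m = l + 2 := by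
  revert l m; decide

theorem e_mul_self (l : Fin 3) : e l * e l = 1 := by
  rw [e, CliffordAlgebra.ι_sq_scalar]
  simp [QuadraticMap.weightedSumSquares_apply, Pi.single_apply]

theorem antiCommute_e {l m : Fin 3} (h : l ≠ m) : AntiCommute (e l) (e m) := by
  refine CliffordAlgebra.ι_mul_ι_comm_of_isOrtho ?_
  rw [QuadraticMap.isOrtho_def]
  fin_cases l <;> fin_cases m <;>
    simp_all [QuadraticMap.weightedSumSquares_apply, Fin.sum_univ_three, Pi.single_apply]

theorem commute_e_mul_e {a b c : Fin 3} (hca : c ≠ a) (hcb : c ≠ b) :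
    Commute (e a * e b) (e c) :=
  ((antiCommute_e hca).mul_right (antiCommute_e hcb)).symm

theorem antiCommute_e_mul_e_left {a b : Fin 3} (hab : a ≠ b) : AntiCommute (e a * e b) (e a) :=
  ((Commute.refl _).mul_right_antiCommute (antiCommute_e hab)).symm

theorem antiCommute_e_mul_e_right {a b : Fin 3} (hab : a ≠ b) : AntiCommute (e a * e b) (e b) :=
  ((antiCommute_e hab.symm).mul_right_commute (Commute.refl _)).symm

theorem commute_X (l m : Fin 3) : Commute (X l) (X m) := by
  obtain rfl | h := eq_or_ne l m
  · exact Commute.refl _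
  · rw [Commute, SemiconjBy, X, X, Algebra.TensorProduct.tmul_mul_tmul,
      Algebra.TensorProduct.tmul_mul_tmul, (antiCommute_e h).eq, TensorProduct.neg_tmul,
      TensorProduct.tmul_neg, neg_neg]

theorem X_mul_X_mul_X_rotate (i : Fin 3) : X i * X (i + 1) * X (i + 2) = X 0 * X 1 * X 2 := by
  fin_cases i
  · rfl
  · change X 1 * X 2 * X 0 = _
    rw [((commute_X 0 1).mul_right (commute_X 0 2)).eq.symm, mul_assoc]
  · change X 2 * X 0 * X 1 = _
    rw [mul_assoc, ((commute_X 2 0).mul_right (commute_X 2 1)).eq]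

theorem w_mul_self (l : Fin 3) : w l * w l = -1 := by
  have hab : AntiCommute (e (l + 1)) (e (l + 2)) := antiCommute_e (fin3_add_two_ne_add_one l).symm
  rw [w, Algebra.TensorProduct.tmul_mul_tmul, mul_one, Algebra.TensorProduct.one_def]
  congr 1
  calc e (l + 1) * e (l + 2) * (e (l + 1) * e (l + 2))
      = e (l + 1) * (e (l + 2) * e (l + 1)) * e (l + 2) := by noncomm_ring
    _ = -(e (l + 1) * e (l + 1) * (e (l + 2) * e (l + 2))) := by rw [hab.symm.eq]; noncomm_ring
    _ = -1 := by rw [e_mul_self, e_mul_self, one_mul]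

theorem commute_w_X_self (l : Fin 3) : Commute (w l) (X l) :=
  (commute_e_mul_e (fin3_add_one_ne_self l).symm (fin3_add_two_ne_self l).symm).tmul
    (Commute.one_left _)

theorem antiCommute_w_X {l m : Fin 3} (h : m ≠ l) : AntiCommute (w l) (X m) := by
  rcases fin3_eq_add_one_or_eq_add_two h with rfl | rfl
  · exact (antiCommute_e_mul_e_left (fin3_add_two_ne_add_one l).symm).tmul (Commute.one_left _)
  · exact (antiCommute_e_mul_e_right (fin3_add_two_ne_add_one l).symm).tmul (Commute.one_left _)

theorem J_eq_zero_of_commute {l : Fin 3} {U : A3} (h : Commute (w l) U) : J l U = 0 := by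
  rw [J, h.eq, sub_self, smul_zero]

theorem J_mul_w_of_antiCommute {l : Fin 3} {U : A3} (h : AntiCommute (w l) U) :
    J l U * w l = U := by
  rw [J, h.eq, ← neg_add', ← two_smul ℝ, smul_neg, smul_smul, one_div, inv_mul_cancel₀ two_ne_zero,
    one_smul, neg_mul, mul_assoc, w_mul_self, mul_neg_one, neg_neg]

theorem K1_eq_rotate (i : Fin 3) (U : A3) :
    K1 U = J i U * w i + J (i + 1) U * w (i + 1) + J (i + 2) U * w (i + 2) := by
  fin_cases i
  · rfl
  · change K1 U = J 1 U * w 1 + J 2 U * w 2 + J 0 U * w 0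
    rw [K1]; abel
  · change K1 U = J 2 U * w 2 + J 0 U * w 0 + J 1 U * w 1
    rw [K1]; abel

def K1ₗ : A3 →ₗ[ℝ] A3 where
  toFun := K1
  map_add' U V := by
    simp only [K1, J, mul_add, add_mul, sub_mul, smul_add, smul_sub, smul_mul_assoc]
    abel
  map_smul' c U := by
    simp only [K1, J, RingHom.id_apply, mul_smul_comm, smul_mul_assoc, sub_mul, smul_sub, smul_add]
    module

theorem K1ₗ_apply (U : A3) : K1ₗ U = K1 U := rfl

theorem K1_one : K1 1 = 0 := by
  simp only [K1, J_eq_zero_of_commute (Commute.one_right _), zero_mul, add_zero]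

theorem K1_X (m : Fin 3) : K1 (X m) = (2 : ℝ) • X m := by
  rw [K1_eq_rotate m, J_eq_zero_of_commute (commute_w_X_self m),
    J_mul_w_of_antiCommute (antiCommute_w_X (fin3_add_one_ne_self m).symm),
    J_mul_w_of_antiCommute (antiCommute_w_X (fin3_add_two_ne_self m).symm), zero_mul, zero_add,
    two_smul]

theorem K1_X_mul_X_add_one (i : Fin 3) : K1 (X i * X (i + 1)) = (2 : ℝ) • (X i * X (i + 1)) := by
  have h₁ := antiCommute_w_X (fin3_add_one_ne_self i)
  have h₂ := antiCommute_w_X (fin3_add_one_ne_self i).symm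
  have h₃ := antiCommute_w_X (fin3_add_two_ne_self i).symm
  have h₄ := antiCommute_w_X (fin3_add_two_ne_add_one i).symm
  rw [K1_eq_rotate i, J_mul_w_of_antiCommute ((commute_w_X_self i).mul_right_antiCommute h₁),
    J_mul_w_of_antiCommute (h₂.mul_right_commute (commute_w_X_self (i + 1))),
    J_eq_zero_of_commute (h₃.mul_right h₄), zero_mul, add_zero, two_smul]

theorem commute_w_X_mul_X_mul_X (l : Fin 3) : Commute (w l) (X 0 * X 1 * X 2) := by
  rw [← X_mul_X_mul_X_rotate l]
  exact ((commute_w_X_self l).mul_right_antiCommute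
    (antiCommute_w_X (fin3_add_one_ne_self l))).mul_right
    (antiCommute_w_X (fin3_add_two_ne_self l))

theorem K1_X_mul_X_mul_X : K1 (X 0 * X 1 * X 2) = 0 := by
  simp only [K1, J_eq_zero_of_commute (commute_w_X_mul_X_mul_X _), zero_mul, add_zero]

theorem Iem_mul_P (i j k : Fin 3) (ε δ : ℝ) :
    Iem i j ε * P k δ =
      (1 / 4 : ℝ) • (1 + ε • (X i * X j) + δ • X k + (ε * δ) • (X i * X j * X k)) := by
  simp only [Iem, P, mul_add, add_mul, one_mul, mul_one, smul_mul_assoc,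
    mul_smul_comm, smul_smul]
  module

theorem stmt8_general (i j k : Fin 3) (hj : j = i + 1) (hk : k = i + 2)
    (ε δ : ℝ) :
    K1 (Iem i j ε * P k δ) =
      2 * (Iem i j ε * P k δ) - (1/2 : ℝ) • ((1 : A3) + (ε * δ) • (X 0 * X 1 * X 2)) := by
  subst hj hk
  rw [Iem_mul_P, X_mul_X_mul_X_rotate, two_mul, ← K1ₗ_apply]
  simp only [map_add, map_smul, K1ₗ_apply, K1_one, K1_X, K1_X_mul_X_add_one, K1_X_mul_X_mul_X]
  module

/-- For each cyclic permutation `(i,j,k)` and signs `ε, δ`: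
`(K+1)(I_{ij}^ε P_k^δ) = 2 I_{ij}^ε P_k^δ − (1/2)(1 + εδ X₁X₂X₃)`. -/
theorem stmt8 (i j k : Fin 3) (hj : j = i + 1) (hk : k = i + 2)
    (ε δ : ℝ) (hε : ε = 1 ∨ ε = -1) (hδ : δ = 1 ∨ δ = -1) :
    K1 (Iem i j ε * P k δ) =
      2 * (Iem i j ε * P k δ) - (1/2 : ℝ) • ((1 : A3) + (ε * δ) • (X 0 * X 1 * X 2)) :=
  stmt8_general i j k hj hk ε δ
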